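/- Let S be a measurable space, let C ≥ 1 and N ≥ 1, and let p^t, p* : S → ℝ^C be measurable maps taking values in the probability simplex {q ∈ ℝ^C : q_k ≥ 0, Σ_k q_k = 1}. Let l : S → ℝ^C be a measurable map with ‖l(x)‖₂ ≤ L for all x, where L ≥ 0. Let x₁, …, x_N be i.i.d. S-valued random variables with common law μ. Define the distillation objective R̃ = (1/N) Σ_{i=1}^N ⟨p^t(x_i), l(x_i)⟩ and the Bayesian objective R = E_{x∼μ}[⟨p*(x), l(x)⟩]. Then E[(R̃ − R)²] ≤ (1/N)·Var_{x∼μ}(⟨p^t(x), l(x)⟩) + L² · (E_{x∼μ}[‖p^t(x) − p*(x)‖₂])². -/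

import Mathlib

open MeasureTheory ProbabilityTheory

lemma simplex_norm_le_one {C : ℕ} (q : EuclideanSpace ℝ (Fin C))
    (h0 : ∀ k, 0 ≤ q k) (h1 : ∑ k, q k = 1) : ‖q‖ ≤ 1 := by
  have hle : ∀ k, q k ≤ 1 := by
    intro k
    calc q k ≤ ∑ j, q j := Finset.single_le_sum (fun j _ => h0 j) (Finset.mem_univ k)
    _ = 1 := h1
  rw [EuclideanSpace.norm_eq]
  have : ∑ k, ‖q k‖ ^ 2 ≤ 1 := by
    calc ∑ k, ‖q k‖ ^ 2 ≤ ∑ k, q k := by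
          apply Finset.sum_le_sum
          intro k _
          rw [Real.norm_eq_abs, sq_abs]
          nlinarith [h0 k, hle k]
    _ = 1 := h1
  calc Real.sqrt (∑ k, ‖q k‖ ^ 2) ≤ Real.sqrt 1 := Real.sqrt_le_sqrt this
  _ = 1 := Real.sqrt_one

/-- Proposition 1 / Eq. (6) of the paper: the mean squared difference between
the distillation objective `R̃ = (1/N) Σᵢ ⟨pᵗ(xᵢ), l(xᵢ)⟩` and the Bayesian objective
`R = E_{x∼μ}[⟨p*(x), l(x)⟩]` is bounded by `Var(⟨pᵗ(x), l(x)⟩)/N + L²·(E[‖pᵗ(x) − p*(x)‖₂])²`. -/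
theorem distillation_objective_close_to_bayesian_objective
    {S : Type*} [MeasurableSpace S]
    {Ω : Type*} [MeasurableSpace Ω] (P : Measure Ω) [IsProbabilityMeasure P]
    (C N : ℕ) (hC : 1 ≤ C) (hN : 1 ≤ N)
    (pt pstar : S → EuclideanSpace ℝ (Fin C))
    (hptMeas : Measurable pt) (hpstarMeas : Measurable pstar)
    (hptSimplex : ∀ x, (∀ k, 0 ≤ pt x k) ∧ ∑ k, pt x k = 1)
    (hpstarSimplex : ∀ x, (∀ k, 0 ≤ pstar x k) ∧ ∑ k, pstar x k = 1)
    (l : S → EuclideanSpace ℝ (Fin C)) (hlMeas : Measurable l)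
    (L : ℝ) (hL : 0 ≤ L) (hlBdd : ∀ x, ‖l x‖ ≤ L)
    (X : Fin N → Ω → S) (hXMeas : ∀ i, Measurable (X i))
    (hindep : iIndepFun X P)
    (μ : Measure S) [IsProbabilityMeasure μ]
    (hlaw : ∀ i, Measure.map (X i) P = μ) :
    ∫ ω, ((1 / (N : ℝ)) * ∑ i, (inner ℝ (pt (X i ω)) (l (X i ω)) : ℝ) -
          ∫ x, (inner ℝ (pstar x) (l x) : ℝ) ∂μ) ^ 2 ∂P ≤
      (1 / (N : ℝ)) * variance (fun x => (inner ℝ (pt x) (l x) : ℝ)) μ +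
        L ^ 2 * (∫ x, ‖pt x - pstar x‖ ∂μ) ^ 2 := by
  set f : S → ℝ := fun x => (inner ℝ (pt x) (l x) : ℝ) with hf
  set g : S → ℝ := fun x => (inner ℝ (pstar x) (l x) : ℝ) with hg
  have hNpos : (0 : ℝ) < N := by exact_mod_cast hN
  have hfmeas : Measurable f := hptMeas.inner hlMeas
  have hgmeas : Measurable g := hpstarMeas.inner hlMeas
  have hptn : ∀ x, ‖pt x‖ ≤ 1 := fun x =>
    simplex_norm_le_one _ (hptSimplex x).1 (hptSimplex x).2
  have hpsn : ∀ x, ‖pstar x‖ ≤ 1 := fun x =>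
    simplex_norm_le_one _ (hpstarSimplex x).1 (hpstarSimplex x).2
  have hfb : ∀ x, |f x| ≤ L := by
    intro x
    calc |f x| ≤ ‖pt x‖ * ‖l x‖ := abs_real_inner_le_norm _ _
    _ ≤ 1 * L := by
        apply mul_le_mul (hptn x) (hlBdd x) (norm_nonneg _) zero_le_one
    _ = L := one_mul L
  have hgb : ∀ x, |g x| ≤ L := by
    intro x
    calc |g x| ≤ ‖pstar x‖ * ‖l x‖ := abs_real_inner_le_norm _ _
    _ ≤ 1 * L := by
        apply mul_le_mul (hpsn x) (hlBdd x) (norm_nonneg _) zero_le_one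
    _ = L := one_mul L
  -- MemLp facts
  have hfmem : MemLp f 2 μ :=
    memLp_of_bounded (ae_of_all _ fun x => abs_le.1 (hfb x)) hfmeas.aestronglyMeasurable 2
  have hgmem : MemLp g 2 μ :=
    memLp_of_bounded (ae_of_all _ fun x => abs_le.1 (hgb x)) hgmeas.aestronglyMeasurable 2
  set Y : Fin N → Ω → ℝ := fun i ω => f (X i ω) with hY
  have hYmeas : ∀ i, Measurable (Y i) := fun i => hfmeas.comp (hXMeas i)
  have hYmem : ∀ i, MemLp (Y i) 2 P := fun i =>
    memLp_of_bounded (ae_of_all _ fun ω => abs_le.1 (hfb _)) (hYmeas i).aestronglyMeasurable 2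
  have hYint : ∀ i, Integrable (Y i) P := fun i => (hYmem i).integrable one_le_two
  set m : ℝ := ∫ x, f x ∂μ with hm
  set Rg : ℝ := ∫ x, g x ∂μ with hRg
  have hYintval : ∀ i, ∫ ω, Y i ω ∂P = m := by
    intro i
    rw [hm, ← hlaw i, integral_map (hXMeas i).aemeasurable hfmeas.aestronglyMeasurable]
  have hYvar : ∀ i, variance (Y i) P = variance f μ := by
    intro i
    rw [variance_eq_sub (hYmem i), variance_eq_sub hfmem]
    have h2 : ∫ ω, Y i ω ^ 2 ∂P = ∫ x, f x ^ 2 ∂μ := by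
      rw [← hlaw i, integral_map (hXMeas i).aemeasurable
        (hfmeas.pow_const 2).aestronglyMeasurable]
    simp only [Pi.pow_apply] at *
    rw [h2, hYintval i]
  set Z : Ω → ℝ := fun ω => (1 / (N : ℝ)) * ∑ i, Y i ω with hZ
  have hZeq : Z = (1 / (N : ℝ)) • (∑ i, Y i) := by
    ext ω; simp [hZ, Finset.sum_apply]
  have hZmeas : Measurable Z := by
    apply Measurable.const_mul
    exact Finset.measurable_sum _ fun i _ => hYmeas i
  have hZb : ∀ ω, |Z ω| ≤ L := by
    intro ω
    rw [hZ]
    simp only [abs_mul]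
    calc |1 / (N:ℝ)| * |∑ i, Y i ω| ≤ (1/(N:ℝ)) * (N * L) := by
          rw [abs_of_nonneg (by positivity : (0:ℝ) ≤ 1/(N:ℝ))]
          apply mul_le_mul_of_nonneg_left _ (by positivity)
          calc |∑ i, Y i ω| ≤ ∑ i, |Y i ω| := Finset.abs_sum_le_sum_abs _ _
          _ ≤ ∑ _i : Fin N, L := Finset.sum_le_sum fun i _ => hfb _
          _ = N * L := by simp [mul_comm]
    _ = L := by field_simp
  have hZmem : MemLp Z 2 P :=
    memLp_of_bounded (ae_of_all _ fun ω => abs_le.1 (hZb ω)) hZmeas.aestronglyMeasurable 2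
  have hZint : Integrable Z P := hZmem.integrable one_le_two
  have hZmean : ∫ ω, Z ω ∂P = m := by
    rw [hZ]
    simp only
    rw [integral_const_mul, integral_finset_sum _ fun i _ => hYint i]
    simp only [hYintval]
    simp
    field_simp
  -- variance of Z
  have hZvar : variance Z P = (1 / (N : ℝ)) * variance f μ := by
    rw [hZeq, variance_smul]
    have hsum : variance (∑ i, Y i) P = ∑ i : Fin N, variance (Y i) P := by
      apply IndepFun.variance_sum (fun i _ => hYmem i)
      intro i _ j _ hij
      exact (hindep.indepFun hij).comp hfmeas hfmeas
    rw [hsum]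
    simp only [hYvar, Finset.sum_const, Finset.card_univ, Fintype.card_fin, nsmul_eq_mul]
    field_simp
  -- ∫ (Z - m)^2 = variance Z
  have hvar_eq : ∫ ω, (Z ω - m) ^ 2 ∂P = variance Z P := by
    rw [variance_eq_integral hZmem.aemeasurable, hZmean]
  -- bias bound
  have hnormint : Integrable (fun x => ‖pt x - pstar x‖) μ := by
    apply (MemLp.integrable le_rfl)
    apply memLp_of_bounded (p := 1) (a := (0:ℝ)) (b := 2)
    · apply ae_of_all
      intro x
      constructor
      · exact norm_nonneg _
      · calc ‖pt x - pstar x‖ ≤ ‖pt x‖ + ‖pstar x‖ := norm_sub_le _ _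
        _ ≤ 1 + 1 := add_le_add (hptn x) (hpsn x)
        _ = 2 := by norm_num
    · exact ((hptMeas.sub hpstarMeas).norm).aestronglyMeasurable
  have hbias : |m - Rg| ≤ L * ∫ x, ‖pt x - pstar x‖ ∂μ := by
    have hsub : m - Rg = ∫ x, (f x - g x) ∂μ := by
      rw [integral_sub (hfmem.integrable one_le_two) (hgmem.integrable one_le_two)]
    rw [hsub]
    calc |∫ x, (f x - g x) ∂μ| ≤ ∫ x, |f x - g x| ∂μ := by
          simpa [Real.norm_eq_abs] using norm_integral_le_integral_norm (fun x => f x - g x)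
    _ ≤ ∫ x, L * ‖pt x - pstar x‖ ∂μ := by
        apply integral_mono_of_nonneg (ae_of_all _ fun x => abs_nonneg _)
          (hnormint.const_mul L)
        apply ae_of_all
        intro x
        show |f x - g x| ≤ L * ‖pt x - pstar x‖
        have : f x - g x = (inner ℝ (pt x - pstar x) (l x) : ℝ) := by
          rw [inner_sub_left]
        rw [this]
        calc |(inner ℝ (pt x - pstar x) (l x) : ℝ)| ≤ ‖pt x - pstar x‖ * ‖l x‖ :=
              abs_real_inner_le_norm _ _
        _ ≤ ‖pt x - pstar x‖ * L := by
            apply mul_le_mul_of_nonneg_left (hlBdd x) (norm_nonneg _)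
        _ = L * ‖pt x - pstar x‖ := mul_comm _ _
    _ = L * ∫ x, ‖pt x - pstar x‖ ∂μ := integral_const_mul L _
  -- decompose the integrand
  have hdecomp : ∀ ω, (Z ω - Rg) ^ 2 =
      (Z ω - m) ^ 2 + (2 * (m - Rg)) * (Z ω - m) + (m - Rg) ^ 2 := by
    intro ω; ring
  have hint1 : Integrable (fun ω => (Z ω - m) ^ 2) P :=
    ((hZmem.sub (memLp_const m)).integrable_sq)
  have hint2 : Integrable (fun ω => (2 * (m - Rg)) * (Z ω - m)) P :=
    ((hZint.sub (integrable_const m)).const_mul _)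
  have hint12 : Integrable (fun ω => (Z ω - m) ^ 2 + (2 * (m - Rg)) * (Z ω - m)) P :=
    hint1.add hint2
  have hLHS : ∫ ω, (Z ω - Rg) ^ 2 ∂P =
      variance Z P + (m - Rg) ^ 2 := by
    calc ∫ ω, (Z ω - Rg) ^ 2 ∂P
        = ∫ ω, ((Z ω - m) ^ 2 + (2 * (m - Rg)) * (Z ω - m) + (m - Rg) ^ 2) ∂P := by
          simp_rw [hdecomp]
    _ = ∫ ω, (Z ω - m) ^ 2 ∂P + ∫ ω, (2 * (m - Rg)) * (Z ω - m) ∂P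
          + ∫ _ω, (m - Rg) ^ 2 ∂P := by
          rw [integral_add hint12 (integrable_const _),
            integral_add hint1 hint2]
    _ = variance Z P + (m - Rg) ^ 2 := by
          rw [hvar_eq, integral_const_mul,
            integral_sub hZint (integrable_const m), hZmean, integral_const]
          simp
  have hgoal : ∫ ω, (Z ω - Rg) ^ 2 ∂P ≤
      (1 / (N : ℝ)) * variance f μ + L ^ 2 * (∫ x, ‖pt x - pstar x‖ ∂μ) ^ 2 := by
    rw [hLHS, hZvar]
    apply add_le_add_right
    calc (m - Rg) ^ 2 = |m - Rg| ^ 2 := (sq_abs _).symm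
    _ ≤ (L * ∫ x, ‖pt x - pstar x‖ ∂μ) ^ 2 := by
        apply pow_le_pow_left₀ (abs_nonneg _) hbias
    _ = L ^ 2 * (∫ x, ‖pt x - pstar x‖ ∂μ) ^ 2 := by ring
  exact hgoal
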